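/- For every countable ordinal α, NPr^α(ℵ_α) holds. -/

import Mathlib

open FirstOrder Cardinal

/-- The increasing enumeration of a finite set in a linear order. -/
noncomputable def enumFun {M : Type*} [LinearOrder M] (w : Finset M) : Fin w.card → M :=
  fun i => (w.orderIsoOfFin rfl i : M)

/-- `rk(w,𝕄) ≥ 0`. -/
def rkBase (L : Language) (M : Type*) [LinearOrder M] [L.Structure M] (w : Finset M) : Prop :=
  ∀ φ : L.Formula (Fin w.card), φ.IsQF → ∀ k : Fin w.card,
    φ.Realize (enumFun w) →
      ¬ ({α : M | φ.Realize (Function.update (enumFun w) k α)}).Countable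

/-- Successor step of the splitting rank. -/
def rkSucc (L : Language) (M : Type*) [LinearOrder M] [L.Structure M]
    (IH : Finset M → Prop) (w : Finset M) : Prop :=
  ∀ φ : L.Formula (Fin w.card), φ.IsQF → ∀ k : Fin w.card,
    φ.Realize (enumFun w) →
      ∃ α : M, α ∉ w ∧ IH (insert α w) ∧ φ.Realize (Function.update (enumFun w) k α)

/-- The splitting rank relation `rk(w,𝕄) ≥ δ`. -/
noncomputable def rkGe (L : Language) (M : Type*) [LinearOrder M] [L.Structure M]
    (δ : Ordinal) : Finset M → Prop :=
  Ordinal.limitRecOn δ (rkBase L M) (fun _ IH => rkSucc L M IH)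
    (fun _ _ IH w => ∀ γ (hγ : γ < _), IH γ hγ w)

/-- `NPr^ε(λ)`: there is a model with universe of cardinality `λ` in a countable vocabulary
all of whose nonempty finite subsets `w` satisfy `1 + rk(w) ≤ ε`. -/
def NPr (ε : Ordinal) (lam : Cardinal) : Prop :=
  ∃ (M : Type) (instO : LinearOrder M) (L : FirstOrder.Language.{0, 0}) (instS : L.Structure M),
    Cardinal.mk M = lam ∧ L.card ≤ Cardinal.aleph0 ∧
    ∀ w : Finset M, w.Nonempty → ∀ δ : Ordinal, @rkGe L M instO instS δ w → 1 + δ ≤ ε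

/-!
Work on `ω_α`. The *residue* of a finite set `W` of ordinals is obtained by repeatedly removing
the largest element `m` and injecting the others into `ω_g`, where `ℵ_g` is the least aleph
`≥ |m|`, until one ordinal is left; for `W ⊆ ω_α` its aleph level `ν(W)` is `< α`, and we show
`rk(w) ≤ ν(w)`. The vocabulary says, for each `γ < α`, that a coordinate survives the collapse
of the others with a final code of level `≤ γ`, and compares the final codes of two surviving
coordinates. If `rk(w) ≥ ε + 1` and `ν(w) ≤ ε`, the first relation, applied to the element of
`w` that survives to the end, yields a new point whose code also has level `≤ ν(w)`; the two
codes then collapse to a residue of level `< max(ν(w), 1)`, against the induction hypothesis when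
`ε ≥ 1`. When `ε = 0` both codes are countable, so, final codes being injective, the second
relation has only countably many solutions in the coordinate with the smaller code, and
`rk ≥ 0` fails.
-/

open Ordinal Language

universe u

section rkGe

variable {L : Language} {M : Type*} [LinearOrder M] [L.Structure M]

theorem rkGe_zero : rkGe L M 0 = rkBase L M :=
  Ordinal.limitRecOn_zero _ _ _

theorem rkGe_add_one (ε : Ordinal) : rkGe L M (ε + 1) = rkSucc L M (rkGe L M ε) :=
  Ordinal.limitRecOn_add_one _ _ _ _

theorem rkGe_of_isSuccLimit {δ : Ordinal} (hδ : Order.IsSuccLimit δ) :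
    rkGe L M δ = fun w => ∀ γ < δ, rkGe L M γ w :=
  Ordinal.limitRecOn_limit _ _ _ _ hδ

theorem not_rkGe_of_countable [Countable M] {w : Finset M} (hw : w.Nonempty) (δ : Ordinal) :
    ¬ rkGe L M δ w := by
  induction δ using Ordinal.limitRecOn generalizing w with
  | zero =>
    rw [rkGe_zero]
    exact fun h => h ⊤ BoundedFormula.IsQF.top ⟨0, hw.card_pos⟩
      (Formula.realize_top.2 trivial) (Set.to_countable _)
  | add_one ε ih =>
    rw [rkGe_add_one]
    intro h
    obtain ⟨a, -, ha, -⟩ :=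
      h ⊤ BoundedFormula.IsQF.top ⟨0, hw.card_pos⟩ (Formula.realize_top.2 trivial)
    exact ih (Finset.insert_nonempty a w) ha
  | limit δ hδ ih =>
    rw [rkGe_of_isSuccLimit hδ]
    exact fun h => ih 0 hδ.bot_lt hw (h 0 hδ.bot_lt)

end rkGe

section enumFun

variable {M : Type*} [LinearOrder M] (w : Finset M)

theorem enumFun_injective : Function.Injective (enumFun w) :=
  fun _ _ h => (w.orderIsoOfFin rfl).injective (Subtype.ext h)

theorem exists_enumFun_eq {x : M} (hx : x ∈ w) : ∃ k, enumFun w k = x :=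
  ⟨(w.orderIsoOfFin rfl).symm ⟨x, hx⟩, by simp [enumFun]⟩

theorem image_univ_enumFun [DecidableEq M] : Finset.univ.image (enumFun w) = w := by
  ext x
  simp only [Finset.mem_image, Finset.mem_univ, true_and]
  exact ⟨fun ⟨k, hk⟩ => hk ▸ (w.orderIsoOfFin rfl k).2, exists_enumFun_eq w⟩

end enumFun

namespace SplittingRank

theorem one_add_le_of_lt {d b : Ordinal.{u}} (h : d < b) : 1 + d ≤ b := by
  rcases lt_or_ge d ω with hd | hd
  · obtain ⟨n, rfl⟩ := lt_omega0.1 hd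
    rw [← Nat.cast_add_one_comm]
    exact Order.add_one_le_of_lt h
  · exact (one_add_of_omega0_le hd).trans_le h.le

noncomputable def alephLevel (t : Ordinal.{u}) : Ordinal.{u} := sInf {g | t.card ≤ ℵ_ g}

theorem card_le_aleph_alephLevel (t : Ordinal.{u}) : t.card ≤ ℵ_ (alephLevel t) := by
  refine csInf_mem (s := {g | t.card ≤ ℵ_ g}) ?_
  obtain ⟨g, hg⟩ := Cardinal.mem_range_aleph_iff.2 (le_max_right t.card ℵ₀)
  exact ⟨g, (le_max_left t.card ℵ₀).trans_eq hg.symm⟩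

theorem alephLevel_le_iff {t g : Ordinal.{u}} : alephLevel t ≤ g ↔ t.card ≤ ℵ_ g :=
  ⟨fun h => (card_le_aleph_alephLevel t).trans (Cardinal.aleph_le_aleph.2 h),
    fun h => csInf_le' h⟩

theorem alephLevel_le_of_lt_omega {t g : Ordinal.{u}} (h : t < ω_ g) : alephLevel t ≤ g :=
  alephLevel_le_iff.2 (lt_omega_iff_card_lt.1 h).le

theorem alephLevel_lt_of_lt_omega {t g : Ordinal.{u}} (hg : g ≠ 0) (h : t < ω_ g) :
    alephLevel t < g := by
  rcases lt_or_ge t.card ℵ₀ with hfin | hinf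
  · rw [← Cardinal.aleph_zero] at hfin
    exact (alephLevel_le_iff.2 hfin.le).trans_lt (pos_iff_ne_zero.2 hg)
  · obtain ⟨h', hh'⟩ := Cardinal.mem_range_aleph_iff.2 hinf
    rw [lt_omega_iff_card_lt, ← hh', Cardinal.aleph_lt_aleph] at h
    exact (alephLevel_le_iff.2 hh'.ge).trans_lt h

theorem countable_Iio_of_alephLevel_eq_zero {t : Ordinal.{u}} (h : alephLevel t = 0) :
    (Set.Iio t).Countable := by
  rw [← Set.countable_coe_iff, ← Cardinal.mk_le_aleph0_iff, Cardinal.mk_Iio_ordinal,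
    ← Cardinal.lift_aleph0.{u + 1, u}, Cardinal.lift_le, ← Cardinal.aleph_zero, ← h]
  exact card_le_aleph_alephLevel t

theorem nonempty_embedding_Iio_omega_alephLevel (t : Ordinal.{u}) :
    Nonempty (Set.Iio t ↪ Set.Iio (ω_ (alephLevel t))) := by
  rw [← Cardinal.le_def, Cardinal.mk_Iio_ordinal, Cardinal.mk_Iio_ordinal, card_omega,
    Cardinal.lift_le]
  exact card_le_aleph_alephLevel t

-- junk value `0` for `ξ ≥ t`
noncomputable def collapse (t ξ : Ordinal.{u}) : Ordinal.{u} :=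
  if h : ξ < t then ((nonempty_embedding_Iio_omega_alephLevel t).some ⟨ξ, h⟩ : _)
  else 0

theorem collapse_lt_omega {t ξ : Ordinal.{u}} (h : ξ < t) :
    collapse t ξ < ω_ (alephLevel t) := by
  rw [collapse, dif_pos h]
  exact ((nonempty_embedding_Iio_omega_alephLevel t).some ⟨ξ, h⟩).2

theorem injOn_collapse (t : Ordinal.{u}) : Set.InjOn (collapse t) (Set.Iio t) := by
  intro ξ hξ ζ hζ h
  simp only [collapse, dif_pos (Set.mem_Iio.1 hξ), dif_pos (Set.mem_Iio.1 hζ)] at h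
  exact congrArg Subtype.val
    ((nonempty_embedding_Iio_omega_alephLevel t).some.injective (Subtype.ext h))

noncomputable def maxOrd (s : Finset Ordinal.{u}) : Ordinal.{u} := s.sup id

section maxOrd

variable {s : Finset Ordinal.{u}} {a : Ordinal.{u}}

theorem le_maxOrd (h : a ∈ s) : a ≤ maxOrd s := Finset.le_sup (f := id) h

theorem maxOrd_mem (hs : s.Nonempty) : maxOrd s ∈ s := by
  obtain ⟨m, hm, he⟩ := Finset.exists_mem_eq_sup s hs id
  rwa [maxOrd, he]

theorem lt_maxOrd_of_mem_erase (h : a ∈ s.erase (maxOrd s)) : a < maxOrd s :=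
  (le_maxOrd (Finset.mem_of_mem_erase h)).lt_of_ne (Finset.ne_of_mem_erase h)

theorem maxOrd_lt_omega {g : Ordinal.{u}} (h : ∀ x ∈ s, x < ω_ g) : maxOrd s < ω_ g :=
  (Finset.sup_lt_iff (omega_pos g)).2 h

theorem maxOrd_insert_of_lt (h : a < maxOrd s) : maxOrd (insert a s) = maxOrd s := by
  rw [maxOrd, Finset.sup_insert]
  exact sup_eq_right.2 h.le

theorem maxOrd_erase_of_ne (h : a ≠ maxOrd s) : maxOrd (s.erase a) = maxOrd s := by
  rcases s.eq_empty_or_nonempty with rfl | hs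
  · rfl
  · refine le_antisymm (Finset.sup_mono (s.erase_subset a)) (le_maxOrd ?_)
    exact Finset.mem_erase.2 ⟨h.symm, maxOrd_mem hs⟩

end maxOrd

noncomputable def collapseTop (s : Finset Ordinal.{u}) : Finset Ordinal.{u} :=
  (s.erase (maxOrd s)).image (collapse (maxOrd s))

section collapseTop

variable {s : Finset Ordinal.{u}} {a : Ordinal.{u}}

theorem mem_collapseTop {b : Ordinal.{u}} :
    b ∈ collapseTop s ↔ ∃ a ∈ s, a < maxOrd s ∧ collapse (maxOrd s) a = b := by
  simp only [collapseTop, Finset.mem_image]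
  constructor
  · rintro ⟨a, ha, rfl⟩
    exact ⟨a, Finset.mem_of_mem_erase ha, lt_maxOrd_of_mem_erase ha, rfl⟩
  · rintro ⟨a, ha, hlt, rfl⟩
    exact ⟨a, Finset.mem_erase.2 ⟨hlt.ne, ha⟩, rfl⟩

theorem card_collapseTop (hs : s.Nonempty) : (collapseTop s).card = s.card - 1 := by
  rw [collapseTop, Finset.card_image_of_injOn, Finset.card_erase_of_mem (maxOrd_mem hs)]
  exact (injOn_collapse _).mono fun _ ha => lt_maxOrd_of_mem_erase ha

theorem card_collapseTop_lt (hs : s.Nonempty) : (collapseTop s).card < s.card := by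
  rw [card_collapseTop hs]
  exact Nat.sub_lt hs.card_pos one_pos

theorem lt_omega_of_mem_collapseTop {g b : Ordinal.{u}} (h : ∀ x ∈ s, x < ω_ g)
    (hb : b ∈ collapseTop s) : b < ω_ g := by
  obtain ⟨a, -, hlt, rfl⟩ := mem_collapseTop.1 hb
  exact (collapse_lt_omega hlt).trans_le
    (omega_le_omega.2 (alephLevel_le_of_lt_omega (maxOrd_lt_omega h)))

theorem collapseTop_insert (h : a < maxOrd s) :
    collapseTop (insert a s) = insert (collapse (maxOrd s) a) (collapseTop s) := by
  rw [collapseTop, maxOrd_insert_of_lt h, Finset.erase_insert_of_ne h.ne, Finset.image_insert,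
    collapseTop]

theorem collapse_notMem_collapseTop (ha : a ∉ s) (h : a < maxOrd s) :
    collapse (maxOrd s) a ∉ collapseTop s := by
  intro hmem
  obtain ⟨b, hb, hblt, he⟩ := mem_collapseTop.1 hmem
  exact ha (injOn_collapse _ hblt h he ▸ hb)

theorem collapseTop_erase (h : a < maxOrd s) :
    collapseTop (s.erase a) = (collapseTop s).erase (collapse (maxOrd s) a) := by
  have hinj := injOn_collapse (maxOrd s)
  ext b
  simp only [collapseTop, maxOrd_erase_of_ne h.ne, Finset.mem_erase, Finset.mem_image]
  constructor
  · rintro ⟨c, ⟨hcm, hca, hcs⟩, rfl⟩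
    have hclt : c < maxOrd s := (le_maxOrd hcs).lt_of_ne hcm
    exact ⟨fun he => hca (hinj hclt h he), c, ⟨hcm, hcs⟩, rfl⟩
  · rintro ⟨hne, c, ⟨hcm, hcs⟩, rfl⟩
    exact ⟨c, ⟨hcm, fun he => hne (he ▸ rfl), hcs⟩, rfl⟩

end collapseTop

/-- `a` is never the largest element while `insert a s` is collapsed, so that
`residue (insert a s) = finalCode s a`. -/
def Survives (s : Finset Ordinal.{u}) (a : Ordinal.{u}) : Prop :=
  if _ : s.Nonempty then a < maxOrd s ∧ Survives (collapseTop s) (collapse (maxOrd s) a)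
  else True
termination_by s.card
decreasing_by exact card_collapseTop_lt ‹_›

noncomputable def finalCode (s : Finset Ordinal.{u}) (a : Ordinal.{u}) : Ordinal.{u} :=
  if _ : s.Nonempty then finalCode (collapseTop s) (collapse (maxOrd s) a) else a
termination_by s.card
decreasing_by exact card_collapseTop_lt ‹_›

noncomputable def residue (s : Finset Ordinal.{u}) : Ordinal.{u} :=
  if _ : 2 ≤ s.card then residue (collapseTop s) else maxOrd s
termination_by s.card
decreasing_by exact card_collapseTop_lt (Finset.card_pos.1 (by omega))

def CodeLT (s : Finset Ordinal.{u}) (a b : Ordinal.{u}) : Prop :=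
  Survives s a ∧ Survives s b ∧ finalCode s a < finalCode s b

def IsFork (W s : Finset Ordinal.{u}) (a b : Ordinal.{u}) : Prop :=
  a ∉ s ∧ b ∉ s ∧ W = insert a (insert b s) ∧ CodeLT s a b

theorem survives_empty (a : Ordinal.{u}) : Survives ∅ a := by
  rw [Survives]; simp

theorem survives_iff {s : Finset Ordinal.{u}} (hs : s.Nonempty) {a : Ordinal.{u}} :
    Survives s a ↔ a < maxOrd s ∧ Survives (collapseTop s) (collapse (maxOrd s) a) := by
  rw [Survives, dif_pos hs]

theorem finalCode_empty (a : Ordinal.{u}) : finalCode ∅ a = a := by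
  rw [finalCode]; simp

theorem finalCode_of_nonempty {s : Finset Ordinal.{u}} (hs : s.Nonempty) (a : Ordinal.{u}) :
    finalCode s a = finalCode (collapseTop s) (collapse (maxOrd s) a) := by
  rw [finalCode, dif_pos hs]

theorem residue_of_two_le {s : Finset Ordinal.{u}} (hs : 2 ≤ s.card) :
    residue s = residue (collapseTop s) := by
  rw [residue, dif_pos hs]

theorem residue_of_card_lt_two {s : Finset Ordinal.{u}} (hs : s.card < 2) :
    residue s = maxOrd s := by
  rw [residue, dif_neg (by omega)]

theorem residue_singleton (a : Ordinal.{u}) : residue {a} = a := by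
  rw [residue_of_card_lt_two (by simp), maxOrd, Finset.sup_singleton, id]

theorem residue_lt_omega {g : Ordinal.{u}} (s : Finset Ordinal.{u}) (h : ∀ x ∈ s, x < ω_ g) :
    residue s < ω_ g := by
  rcases lt_or_ge s.card 2 with hs | hs
  · rw [residue_of_card_lt_two hs]
    exact maxOrd_lt_omega h
  · rw [residue_of_two_le hs]
    exact residue_lt_omega _ fun _ => lt_omega_of_mem_collapseTop h
termination_by s.card
decreasing_by exact card_collapseTop_lt (Finset.card_pos.1 (by omega))

theorem finalCode_injOn (s : Finset Ordinal.{u}) : Set.InjOn (finalCode s) {a | Survives s a} := by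
  intro a ha b hb h
  rcases s.eq_empty_or_nonempty with rfl | hs
  · rwa [finalCode_empty, finalCode_empty] at h
  · rw [Set.mem_ofPred_eq, survives_iff hs] at ha hb
    rw [finalCode_of_nonempty hs, finalCode_of_nonempty hs] at h
    exact injOn_collapse _ ha.1 hb.1 (finalCode_injOn _ ha.2 hb.2 h)
termination_by s.card
decreasing_by exact card_collapseTop_lt hs

theorem residue_insert (s : Finset Ordinal.{u}) {a : Ordinal.{u}} (ha : a ∉ s)
    (h : Survives s a) : residue (insert a s) = finalCode s a := by
  rcases s.eq_empty_or_nonempty with rfl | hs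
  · rw [insert_empty_eq, residue_singleton, finalCode_empty]
  · rw [survives_iff hs] at h
    have htwo : 2 ≤ (insert a s).card := by
      rw [Finset.card_insert_of_notMem ha]
      exact Nat.succ_le_succ hs.card_pos
    rw [residue_of_two_le htwo, collapseTop_insert h.1,
      residue_insert _ (collapse_notMem_collapseTop ha h.1) h.2, finalCode_of_nonempty hs]
termination_by s.card
decreasing_by exact card_collapseTop_lt hs

theorem residue_pair {a b : Ordinal.{u}} (h : a < b) : residue {a, b} = collapse b a := by
  have hmax : maxOrd {b} = b := Finset.sup_singleton
  have hnonempty := Finset.singleton_nonempty b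
  have hsurv : Survives {b} a := by
    rw [survives_iff hnonempty, hmax]
    exact ⟨h, by simp [collapseTop, hmax, survives_empty]⟩
  rw [residue_insert _ (by simpa using h.ne) hsurv,
    finalCode_of_nonempty hnonempty, hmax]
  simp [collapseTop, hmax, finalCode_empty]

theorem residue_insert_insert (s : Finset Ordinal.{u}) {a b : Ordinal.{u}} (ha : a ∉ s)
    (hb : b ∉ s) (h : CodeLT s a b) :
    residue (insert a (insert b s)) = collapse (finalCode s b) (finalCode s a) := by
  obtain ⟨hsa, hsb, hlt⟩ := h
  rcases s.eq_empty_or_nonempty with rfl | hs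
  · rw [finalCode_empty, finalCode_empty] at hlt ⊢
    exact residue_pair hlt
  · rw [survives_iff hs] at hsa hsb
    have hab : a ≠ b := fun he => hlt.ne (he ▸ rfl)
    have ha' : a ∉ insert b s := by simp [hab, ha]
    have htwo : 2 ≤ (insert a (insert b s)).card := by
      rw [Finset.card_insert_of_notMem ha', Finset.card_insert_of_notMem hb]
      omega
    rw [finalCode_of_nonempty hs, finalCode_of_nonempty hs] at hlt ⊢
    rw [residue_of_two_le htwo,
      collapseTop_insert (s := insert b s) (by rw [maxOrd_insert_of_lt hsb.1]; exact hsa.1),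
      maxOrd_insert_of_lt hsb.1,
      collapseTop_insert hsb.1,
      residue_insert_insert _ (collapse_notMem_collapseTop ha hsa.1)
        (collapse_notMem_collapseTop hb hsb.1) ⟨hsa.2, hsb.2, hlt⟩]
termination_by s.card
decreasing_by exact card_collapseTop_lt hs

theorem exists_survives_erase (s : Finset Ordinal.{u}) (hs : s.Nonempty) :
    ∃ x ∈ s, Survives (s.erase x) x := by
  rcases lt_or_ge s.card 2 with hone | htwo
  · obtain ⟨x, rfl⟩ := (Finset.card_eq_one (s := s)).1 (by have := hs.card_pos; omega)
    exact ⟨x, Finset.mem_singleton_self x, by simpa using survives_empty x⟩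
  · have hne : (collapseTop s).Nonempty := by
      rw [← Finset.card_pos, card_collapseTop hs]
      omega
    obtain ⟨y, hy, hsurv⟩ := exists_survives_erase (collapseTop s) hne
    obtain ⟨x, hx, hlt, rfl⟩ := mem_collapseTop.1 hy
    refine ⟨x, hx, ?_⟩
    have hne' : (s.erase x).Nonempty :=
      ⟨maxOrd s, Finset.mem_erase.2 ⟨hlt.ne', maxOrd_mem hs⟩⟩
    rw [survives_iff hne', maxOrd_erase_of_ne hlt.ne, collapseTop_erase hlt]
    exact ⟨hlt, hsurv⟩
termination_by s.card
decreasing_by exact card_collapseTop_lt hs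

theorem IsFork.alephLevel_residue_lt {W s : Finset Ordinal.{u}} {a b : Ordinal.{u}}
    (h : IsFork W s a b) : alephLevel (residue W) < max (alephLevel (finalCode s b)) 1 := by
  obtain ⟨ha, hb, rfl, hcode⟩ := h
  rw [residue_insert_insert s ha hb hcode]
  refine alephLevel_lt_of_lt_omega (zero_lt_one.trans_le (le_max_right _ _)).ne' ?_
  exact (collapse_lt_omega hcode.2.2).trans_le (omega_le_omega.2 (le_max_left _ _))

theorem countable_setOf_codeLT {s : Finset Ordinal.{u}} {b : Ordinal.{u}}
    (h : alephLevel (finalCode s b) = 0) : {a | CodeLT s a b}.Countable :=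
  Set.MapsTo.countable_of_injOn (fun _ ha => ha.2.2) ((finalCode_injOn s).mono fun _ ha => ha.1)
    (countable_Iio_of_alephLevel_eq_zero h)

variable (A : Ordinal.{0})

abbrev Carrier : Type := (ω_ A).ToType

variable {A} in
noncomputable def toOrd (x : Carrier A) : Ordinal.{0} := (ToType.mk.symm x : Set.Iio (ω_ A))

theorem toOrd_lt_omega (x : Carrier A) : toOrd x < ω_ A := (ToType.mk.symm x).2

theorem toOrd_injective : Function.Injective (toOrd (A := A)) :=
  fun _ _ h => ToType.mk.symm.injective (Subtype.ext h)

theorem mk_carrier : #(Carrier A) = ℵ_ A := by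
  rw [mk_toType, card_omega]

theorem alephLevel_residue_image_lt (hA : A ≠ 0) (w : Finset (Carrier A)) :
    alephLevel (residue (w.image toOrd)) < A := by
  refine alephLevel_lt_of_lt_omega hA (residue_lt_omega _ fun x hx => ?_)
  obtain ⟨y, -, rfl⟩ := Finset.mem_image.1 hx
  exact toOrd_lt_omega A y

def language : FirstOrder.Language.{0, 0} where
  Functions _ := Empty
  Relations n := (Fin n × A.ToType) ⊕ (Fin n × Fin n)

theorem card_language_le (hA : A < (ℵ_ 1).ord) : (language A).card ≤ ℵ₀ := by
  have : Countable A.ToType := by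
    rw [← mk_le_aleph0_iff, mk_toType, ← lt_aleph_one_iff]
    exact lt_ord.1 hA
  have : ∀ n, Countable ((language A).Relations n) := fun n =>
    inferInstanceAs (Countable ((Fin n × A.ToType) ⊕ (Fin n × Fin n)))
  have : ∀ n, Countable ((language A).Functions n) := fun _ => inferInstanceAs (Countable Empty)
  exact mk_le_aleph0

variable {A}

noncomputable def others {n : ℕ} (v : Fin n → Carrier A) (k : Fin n) : Finset Ordinal.{0} :=
  (Finset.univ.erase k).image (toOrd ∘ v)

/-- `inl (k, i)` says that coordinate `k` survives the collapse of the other coordinates with a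
final code of aleph level at most `i`; `inr (k, k')` compares the final codes of the coordinates
`k` and `k'` over the remaining ones. -/
noncomputable instance : (language A).Structure (Carrier A) where
  funMap f := Empty.elim f
  RelMap
    | .inl (k, i), v => Survives (others v k) (toOrd (v k)) ∧
        alephLevel (finalCode (others v k) (toOrd (v k))) ≤ (ToType.mk.symm i : Ordinal)
    | .inr (k, k'), v => CodeLT ((others v k).erase (toOrd (v k'))) (toOrd (v k)) (toOrd (v k'))

def levelFormula {n : ℕ} (k : Fin n) (i : A.ToType) : (language A).Formula (Fin n) :=
  Relations.formula (Sum.inl (k, i)) Term.var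

variable (A) in
def codeLTFormula {n : ℕ} (k k' : Fin n) : (language A).Formula (Fin n) :=
  Relations.formula (Sum.inr (k, k')) Term.var

theorem isQF_levelFormula {n : ℕ} (k : Fin n) (i : A.ToType) : (levelFormula k i).IsQF :=
  (BoundedFormula.IsAtomic.rel _ _).isQF

theorem isQF_codeLTFormula {n : ℕ} (k k' : Fin n) : (codeLTFormula A k k').IsQF :=
  (BoundedFormula.IsAtomic.rel _ _).isQF

theorem realize_levelFormula {n : ℕ} (k : Fin n) (i : A.ToType) (v : Fin n → Carrier A) :
    (levelFormula k i).Realize v ↔ Survives (others v k) (toOrd (v k)) ∧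
      alephLevel (finalCode (others v k) (toOrd (v k))) ≤ (ToType.mk.symm i : Ordinal) :=
  Iff.rfl

theorem realize_codeLTFormula {n : ℕ} (k k' : Fin n) (v : Fin n → Carrier A) :
    (codeLTFormula A k k').Realize v ↔
      CodeLT ((others v k).erase (toOrd (v k'))) (toOrd (v k)) (toOrd (v k')) :=
  Iff.rfl

theorem others_enumFun (w : Finset (Carrier A)) (k : Fin w.card) :
    others (enumFun w) k = (w.image toOrd).erase (toOrd (enumFun w k)) := by
  rw [others, Finset.image_erase ((toOrd_injective A).comp (enumFun_injective w)),
    Finset.image_comp, image_univ_enumFun, Function.comp_apply]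

theorem others_update {n : ℕ} (v : Fin n → Carrier A) (k : Fin n) (x : Carrier A) :
    others (Function.update v k x) k = others v k :=
  Finset.image_congr fun _ hj => by
    simp only [Function.comp_apply, Function.update_of_ne (Finset.ne_of_mem_erase hj)]

theorem not_rkBase_of_isFork {T : Finset (Carrier A)} {s : Finset Ordinal.{0}} {y z : Carrier A}
    (h : IsFork (T.image toOrd) s (toOrd y) (toOrd z))
    (h0 : alephLevel (finalCode s (toOrd z)) = 0) :
    ¬ rkBase (language A) (Carrier A) T := by
  obtain ⟨hys, hzs, hT, hcode⟩ := h
  have hyz : toOrd y ≠ toOrd z := fun he => hcode.2.2.ne (he ▸ rfl)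
  have hy : y ∈ T := (toOrd_injective A).mem_finset_image.1 (hT ▸ Finset.mem_insert_self _ _)
  have hz : z ∈ T := (toOrd_injective A).mem_finset_image.1
    (hT ▸ Finset.mem_insert_of_mem (Finset.mem_insert_self _ _))
  obtain ⟨k, rfl⟩ := exists_enumFun_eq T hy
  obtain ⟨k', rfl⟩ := exists_enumFun_eq T hz
  have hk : k' ≠ k := fun he => hyz (he ▸ rfl)
  have hs : (others (enumFun T) k).erase (toOrd (enumFun T k')) = s := by
    rw [others_enumFun, hT, Finset.erase_insert (by simp [hyz, hys]), Finset.erase_insert hzs]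
  intro hbase
  refine hbase (codeLTFormula A k k') (isQF_codeLTFormula k k') k
    ((realize_codeLTFormula k k' _).2 (hs ▸ hcode)) ?_
  refine ((countable_setOf_codeLT h0).preimage (toOrd_injective A)).mono fun x hx => ?_
  rwa [Set.mem_ofPred_eq, realize_codeLTFormula, others_update, Function.update_self,
    Function.update_of_ne hk, hs] at hx

theorem exists_isFork_of_rkSucc (hA : A ≠ 0) {P : Finset (Carrier A) → Prop}
    {w : Finset (Carrier A)} (hw : w.Nonempty) (h : rkSucc (language A) (Carrier A) P w) :
    ∃ a ∉ w, P (insert a w) ∧ ∃ (s : Finset Ordinal.{0}) (y z : Carrier A),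
      IsFork ((insert a w).image toOrd) s (toOrd y) (toOrd z) ∧
        alephLevel (finalCode s (toOrd z)) ≤ alephLevel (residue (w.image toOrd)) := by
  obtain ⟨x, hxW, hsurv⟩ := exists_survives_erase _ (hw.image toOrd)
  obtain ⟨ξ, hξ, rfl⟩ := Finset.mem_image.1 hxW
  obtain ⟨k, rfl⟩ := exists_enumFun_eq w hξ
  set s := (w.image toOrd).erase (toOrd (enumFun w k))
  have hres : residue (w.image toOrd) = finalCode s (toOrd (enumFun w k)) := by
    rw [← residue_insert s (Finset.notMem_erase _ _) hsurv, Finset.insert_erase hxW]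
  obtain ⟨i, hi⟩ : ∃ i : A.ToType,
      (ToType.mk.symm i : Ordinal) = alephLevel (residue (w.image toOrd)) :=
    ⟨ToType.mk ⟨_, alephLevel_residue_image_lt A hA w⟩, by simp⟩
  have hreal : (levelFormula k i).Realize (enumFun w) := by
    rw [realize_levelFormula, others_enumFun, hi, hres]
    exact ⟨hsurv, le_rfl⟩
  obtain ⟨a, haw, hP, ha⟩ := h _ (isQF_levelFormula k i) k hreal
  rw [realize_levelFormula, others_update, Function.update_self, others_enumFun, hi] at ha
  have has : toOrd a ∉ s := fun h => haw ((toOrd_injective A).mem_finset_image.1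
    (Finset.mem_of_mem_erase h))
  have hne : finalCode s (toOrd a) ≠ finalCode s (toOrd (enumFun w k)) := fun he =>
    haw ((toOrd_injective A) (finalCode_injOn s ha.1 hsurv he) ▸ hξ)
  have himage : (insert a w).image toOrd = insert (toOrd a) (insert (toOrd (enumFun w k)) s) := by
    rw [Finset.image_insert, Finset.insert_erase hxW]
  refine ⟨a, haw, hP, s, ?_⟩
  rcases hne.lt_or_gt with hlt | hlt
  · exact ⟨a, enumFun w k, ⟨has, Finset.notMem_erase _ _, himage, ha.1, hsurv, hlt⟩,
      (congrArg alephLevel hres).ge⟩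
  · exact ⟨enumFun w k, a, ⟨Finset.notMem_erase _ _, has,
      himage.trans (Finset.insert_comm _ _ _), hsurv, ha.1, hlt⟩, ha.2⟩

theorem le_alephLevel_residue_of_rkGe (hA : A ≠ 0) (δ : Ordinal.{0}) {w : Finset (Carrier A)}
    (hw : w.Nonempty) (h : rkGe (language A) (Carrier A) δ w) :
    δ ≤ alephLevel (residue (w.image toOrd)) := by
  induction δ using Ordinal.limitRecOn generalizing w with
  | zero => exact zero_le
  | add_one ε ih =>
    rw [rkGe_add_one] at h
    obtain ⟨a, -, hrk, s, y, z, hfork, hlevel⟩ := exists_isFork_of_rkSucc hA hw h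
    by_contra! hlt
    have hle : alephLevel (residue (w.image toOrd)) ≤ ε := Order.lt_add_one_iff.1 hlt
    rcases eq_or_ne ε 0 with rfl | hε
    · rw [rkGe_zero] at hrk
      exact not_rkBase_of_isFork hfork (nonpos_iff_eq_zero.1 (hlevel.trans hle)) hrk
    · refine (ih (Finset.insert_nonempty a w) hrk).not_gt (hfork.alephLevel_residue_lt.trans_le ?_)
      exact max_le (hlevel.trans hle) (Order.one_le_iff_ne_zero.2 hε)
  | limit δ hδ ih =>
    rw [rkGe_of_isSuccLimit hδ] at h
    by_contra! hlt
    exact (ih _ (hδ.succ_lt hlt) hw (h _ (hδ.succ_lt hlt))).not_gt (Order.lt_succ _)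

end SplittingRank

open SplittingRank in
/-- For every countable ordinal `α`, `NPr^α(ℵ_α)` holds. -/
theorem stmt_9 (α : Ordinal) (hα : α < (Cardinal.aleph 1).ord) :
    NPr α (Cardinal.aleph α) := by
  refine ⟨Carrier α, inferInstance, language α, inferInstance, mk_carrier α,
    card_language_le α hα, fun w hw δ h => ?_⟩
  rcases eq_or_ne α 0 with rfl | hα0
  · have : Countable (Carrier 0) := by
      rw [← mk_le_aleph0_iff, mk_carrier, aleph_zero]
    exact absurd h (not_rkGe_of_countable hw δ)
  · exact one_add_le_of_lt ((le_alephLevel_residue_of_rkGe hα0 δ hw h).trans_lt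
      (alephLevel_residue_image_lt α hα0 w))
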